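/- Let α ∈ ℂ, let U ⊆ ℂ be open, and let q₁, p₁, q₂, p₂ : ℂ → ℂ be differentiable on U and satisfy system (3): q₁' = q₁² + p₂, p₁' = −2 q₁ p₁ − α − 1/2, q₂' = −(1/2) p₂² + p₁ + t/2, p₂' = q₂ on U. Then u := −q₁ is four times complex differentiable on U and satisfies u'''' = −5 u' u'' + 5 u² u'' + 5 u (u')² − u⁵ + t u + α on U. -/

import Mathlib

/-!
Along a solution of system (3) every derivative of `q₁` is a polynomial in `t, q₁, p₁, q₂, p₂`:
`q₁' = q₁² + p₂`, and differentiating with the equations of the system gives `q₁''`, `q₁'''`,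
`q₁''''`. On the open set `U` these polynomials agree with the iterated derivatives of `q₁`
near every point, so the iterated derivatives are differentiable. Substituting the four
polynomials into equation (1) for `u = -q₁`, the momentum `p₁` cancels and the equation becomes
a polynomial identity.
-/

theorem hasDerivAt_deriv_of_forall_mem {𝕜 F : Type*} [NontriviallyNormedField 𝕜]
    [NormedAddCommGroup F] [NormedSpace 𝕜 F] {f g g' : 𝕜 → F} {U : Set 𝕜} (hU : IsOpen U)
    (hf : ∀ s ∈ U, HasDerivAt f (g s) s) (hg : ∀ s ∈ U, HasDerivAt g (g' s) s) :
    ∀ s ∈ U, HasDerivAt (deriv f) (g' s) s := fun s hs =>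
  (hg s hs).congr_of_eventuallyEq
    (Filter.eventuallyEq_of_mem (hU.mem_nhds hs) fun x hx => (hf x hx).deriv)

structure IsHamiltonianSolution (α : ℂ) (U : Set ℂ) (q1 p1 q2 p2 : ℂ → ℂ) : Prop where
  hasDerivAt_q1 : ∀ t ∈ U, HasDerivAt q1 (q1 t ^ 2 + p2 t) t
  hasDerivAt_p1 : ∀ t ∈ U, HasDerivAt p1 (-2 * q1 t * p1 t - α - 1/2) t
  hasDerivAt_q2 : ∀ t ∈ U, HasDerivAt q2 (-(1/2) * p2 t ^ 2 + p1 t + t / 2) t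
  hasDerivAt_p2 : ∀ t ∈ U, HasDerivAt p2 (q2 t) t

namespace IsHamiltonianSolution

def dq1 (q1 p2 : ℂ → ℂ) (t : ℂ) : ℂ := q1 t ^ 2 + p2 t

def d2q1 (q1 q2 p2 : ℂ → ℂ) (t : ℂ) : ℂ := 2 * q1 t * dq1 q1 p2 t + q2 t

noncomputable def d3q1 (q1 p1 q2 p2 : ℂ → ℂ) (t : ℂ) : ℂ :=
  2 * dq1 q1 p2 t ^ 2 + 2 * q1 t * d2q1 q1 q2 p2 t + (-(1/2) * p2 t ^ 2 + p1 t + t / 2)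

noncomputable def d4q1 (α : ℂ) (q1 p1 q2 p2 : ℂ → ℂ) (t : ℂ) : ℂ :=
  6 * dq1 q1 p2 t * d2q1 q1 q2 p2 t + 2 * q1 t * d3q1 q1 p1 q2 p2 t
    - p2 t * q2 t - 2 * q1 t * p1 t - α

variable {α : ℂ} {U : Set ℂ} {q1 p1 q2 p2 : ℂ → ℂ}

theorem hasDerivAt_dq1 (h : IsHamiltonianSolution α U q1 p1 q2 p2) :
    ∀ t ∈ U, HasDerivAt (dq1 q1 p2) (d2q1 q1 q2 p2 t) t := fun t ht =>
  (((h.hasDerivAt_q1 t ht).pow 2).add (h.hasDerivAt_p2 t ht)).congr_deriv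
    (by simp only [d2q1, dq1]; ring)

theorem hasDerivAt_d2q1 (h : IsHamiltonianSolution α U q1 p1 q2 p2) :
    ∀ t ∈ U, HasDerivAt (d2q1 q1 q2 p2) (d3q1 q1 p1 q2 p2 t) t := fun t ht =>
  ((((h.hasDerivAt_q1 t ht).const_mul 2).mul (h.hasDerivAt_dq1 t ht)).add
    (h.hasDerivAt_q2 t ht)).congr_deriv (by simp only [d3q1, dq1]; ring)

theorem hasDerivAt_d3q1 (h : IsHamiltonianSolution α U q1 p1 q2 p2) :
    ∀ t ∈ U, HasDerivAt (d3q1 q1 p1 q2 p2) (d4q1 α q1 p1 q2 p2 t) t := fun t ht =>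
  (((((h.hasDerivAt_dq1 t ht).pow 2).const_mul 2).add
    (((h.hasDerivAt_q1 t ht).const_mul 2).mul (h.hasDerivAt_d2q1 t ht))).add
    (((((h.hasDerivAt_p2 t ht).pow 2).const_mul (-(1/2))).add (h.hasDerivAt_p1 t ht)).add
      ((hasDerivAt_id t).div_const 2))).congr_deriv
    (by simp only [d4q1, dq1]; ring)

theorem neg_d4q1_eq (α : ℂ) (q1 p1 q2 p2 : ℂ → ℂ) (t : ℂ) :
    -d4q1 α q1 p1 q2 p2 t =
      -5 * -dq1 q1 p2 t * -d2q1 q1 q2 p2 t + 5 * (-q1 t) ^ 2 * -d2q1 q1 q2 p2 t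
        + 5 * (-q1 t) * (-dq1 q1 p2 t) ^ 2 - (-q1 t) ^ 5 + t * (-q1 t) + α := by
  simp only [d4q1, d3q1, d2q1, dq1]
  ring

end IsHamiltonianSolution

theorem stmt1 (α : ℂ) (U : Set ℂ) (hU : IsOpen U) (q1 p1 q2 p2 : ℂ → ℂ)
    (hq1 : ∀ t ∈ U, HasDerivAt q1 (q1 t ^ 2 + p2 t) t)
    (hp1 : ∀ t ∈ U, HasDerivAt p1 (-2 * q1 t * p1 t - α - 1/2) t)
    (hq2 : ∀ t ∈ U, HasDerivAt q2 (-(1/2) * p2 t ^ 2 + p1 t + t / 2) t)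
    (hp2 : ∀ t ∈ U, HasDerivAt p2 (q2 t) t) :
    ∀ t ∈ U,
      (HasDerivAt (fun s => -q1 s) (deriv (fun s => -q1 s) t) t) ∧
      (HasDerivAt (deriv (fun s => -q1 s)) (deriv (deriv (fun s => -q1 s)) t) t) ∧
      (HasDerivAt (deriv (deriv (fun s => -q1 s)))
        (deriv (deriv (deriv (fun s => -q1 s))) t) t) ∧
      (HasDerivAt (deriv (deriv (deriv (fun s => -q1 s))))
        (deriv (deriv (deriv (deriv (fun s => -q1 s)))) t) t) ∧
      deriv (deriv (deriv (deriv (fun s => -q1 s)))) t =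
        -5 * deriv (fun s => -q1 s) t * deriv (deriv (fun s => -q1 s)) t
          + 5 * (-q1 t) ^ 2 * deriv (deriv (fun s => -q1 s)) t
          + 5 * (-q1 t) * (deriv (fun s => -q1 s) t) ^ 2
          - (-q1 t) ^ 5 + t * (-q1 t) + α := by
  have h : IsHamiltonianSolution α U q1 p1 q2 p2 := ⟨hq1, hp1, hq2, hp2⟩
  have d1 : ∀ s ∈ U, HasDerivAt (fun s => -q1 s) (-IsHamiltonianSolution.dq1 q1 p2 s) s := fun s hs =>
    (hq1 s hs).neg
  have d2 := hasDerivAt_deriv_of_forall_mem hU d1 fun s hs => (h.hasDerivAt_dq1 s hs).neg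
  have d3 := hasDerivAt_deriv_of_forall_mem hU d2 fun s hs => (h.hasDerivAt_d2q1 s hs).neg
  have d4 := hasDerivAt_deriv_of_forall_mem hU d3 fun s hs => (h.hasDerivAt_d3q1 s hs).neg
  intro t ht
  refine ⟨(d1 t ht).differentiableAt.hasDerivAt, (d2 t ht).differentiableAt.hasDerivAt,
    (d3 t ht).differentiableAt.hasDerivAt, (d4 t ht).differentiableAt.hasDerivAt, ?_⟩
  rw [(d4 t ht).deriv, (d1 t ht).deriv, (d2 t ht).deriv]
  exact IsHamiltonianSolution.neg_d4q1_eq α q1 p1 q2 p2 t
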